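/- arXiv:2202.13016 — 8 statements merged into one kernel-verified Lean document; each statement's English description precedes it below -/
import Mathlib

section
/- Let m = (m_1,…,m_n) ∈ ℕ^n with not all components equal, let m_k = max_i m_i, let C = { j : m_j = m_k }, c = |C|, and γ = Σ_i m_i. Define the γ×n matrix B by b_{γ,j} = 1 - γ/(c·m_k) for j ∈ C, and b_{i,j} = 1 in all other positions. Then mperm_m(B) = 0. -/
/-- The multipermanent of the `γ × n` matrix `X`. -/
def mperm {γ n : ℕ} (m : Fin n → ℕ) (X : Fin γ → Fin n → ℚ) : ℚ :=
  ∑ σ ∈ Finset.univ.filter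
      (fun σ : Fin γ → Fin n => ∀ j, (Finset.univ.filter (fun i => σ i = j)).card = m j),
    ∏ i, X i (σ i)

/-!
Let `S` be the set of maps `σ : [γ] → [n]` with fibre sizes `m`. Permuting rows preserves `S`,
so for each column `j` the number of `σ ∈ S` with `σ i = j` does not depend on the row `i`;
double counting the pairs `(σ, i)` with `σ i = j` shows it equals `m_j |S| / γ`. If every row
of `X` but one, `i₀`, is constantly `1`, only row `i₀` contributes to each product and
`γ · mperm_m(X) = |S| · Σ_j m_j x_{i₀,j}`. The last row of `B` is weighted so that this sum is
`γ - (γ / (c m_k)) · c m_k = 0`.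
-/

open Finset

namespace MultiAssignment

theorem card_filter_comp_perm {ι α : Type*} [Fintype ι] [DecidableEq α] (σ : ι → α)
    (e : Equiv.Perm ι) (j : α) :
    #{i | σ (e i) = j} = #{i | σ i = j} := by
  simp only [card_filter]
  exact Equiv.sum_comp e fun i => if σ i = j then 1 else 0

variable {ι α : Type*} [Fintype ι] [DecidableEq ι] [Fintype α] [DecidableEq α]

variable (ι) in
def assignments (m : α → ℕ) : Finset (ι → α) :=
  univ.filter fun σ => ∀ j, #{i | σ i = j} = m j

theorem mem_assignments {m : α → ℕ} {σ : ι → α} :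
    σ ∈ assignments ι m ↔ ∀ j, #{i | σ i = j} = m j := by
  simp [assignments]

theorem comp_perm_mem_assignments {m : α → ℕ} {σ : ι → α} (hσ : σ ∈ assignments ι m)
    (e : Equiv.Perm ι) : σ ∘ e ∈ assignments ι m := by
  rw [mem_assignments] at hσ ⊢
  intro j
  rw [← hσ j, ← card_filter_comp_perm σ e j]
  rfl

/-- Composition with the transposition `swap i i'` exchanges the two sets. -/
theorem card_filter_apply_eq_eq (m : α → ℕ) (i i' : ι) (j : α) :
    #{σ ∈ assignments ι m | σ i = j} = #{σ ∈ assignments ι m | σ i' = j} := by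
  have hswap (σ : ι → α) : σ ∘ Equiv.swap i i' ∘ Equiv.swap i i' = σ := by
    ext x
    simp
  refine card_nbij' (· ∘ Equiv.swap i i') (· ∘ Equiv.swap i i') ?_ ?_
    (fun σ _ => hswap σ) (fun σ _ => hswap σ) <;>
  · intro σ hσ
    simp only [coe_filter, Set.mem_ofPred_eq, Function.comp_apply,
      Equiv.swap_apply_left, Equiv.swap_apply_right] at hσ ⊢
    exact ⟨comp_perm_mem_assignments hσ.1 _, hσ.2⟩

/-- Double counting of the pairs `(σ, i)` with `σ i = j`. -/
theorem card_mul_card_filter_apply_eq (m : α → ℕ) (i₀ : ι) (j : α) :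
    Fintype.card ι * #{σ ∈ assignments ι m | σ i₀ = j} = m j * #(assignments ι m) := by
  calc Fintype.card ι * #{σ ∈ assignments ι m | σ i₀ = j}
      = ∑ i : ι, #{σ ∈ assignments ι m | σ i = j} := by
        simp [card_filter_apply_eq_eq m _ i₀]
    _ = ∑ σ ∈ assignments ι m, #{i | σ i = j} := by
        simp only [card_filter]
        exact sum_comm
    _ = m j * #(assignments ι m) := by
        rw [sum_congr rfl fun σ hσ => mem_assignments.mp hσ j, sum_const, smul_eq_mul,
          mul_comm]

theorem card_mul_sum_prod_of_eq_one {R : Type*} [CommSemiring R] (m : α → ℕ) (i₀ : ι)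
    (X : ι → α → R) (hX : ∀ i ≠ i₀, ∀ j, X i j = 1) :
    Fintype.card ι * ∑ σ ∈ assignments ι m, ∏ i, X i (σ i)
      = #(assignments ι m) * ∑ j, m j * X i₀ j := by
  have hprod (σ : ι → α) : ∏ i, X i (σ i) = X i₀ (σ i₀) :=
    prod_eq_single i₀ (fun i _ hi => hX i hi (σ i)) (by simp)
  calc (Fintype.card ι : R) * ∑ σ ∈ assignments ι m, ∏ i, X i (σ i)
      = Fintype.card ι * ∑ j, #{σ ∈ assignments ι m | σ i₀ = j} * X i₀ j := by
        simp_rw [hprod, ← sum_fiberwise (assignments ι m) (· i₀) (fun σ => X i₀ (σ i₀))]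
        congr 1
        refine sum_congr rfl fun j _ => ?_
        rw [sum_congr rfl fun σ hσ => by rw [(mem_filter.mp hσ).2], sum_const, nsmul_eq_mul]
    _ = #(assignments ι m) * ∑ j, m j * X i₀ j := by
        rw [mul_sum, mul_sum]
        refine sum_congr rfl fun j _ => ?_
        rw [← mul_assoc, ← mul_assoc]
        congr 1
        exact_mod_cast congrArg (Nat.cast (R := R))
          ((card_mul_card_filter_apply_eq m i₀ j).trans (mul_comm _ _))

end MultiAssignment

theorem mperm_eq_sum_assignments {γ n : ℕ} (m : Fin n → ℕ) (X : Fin γ → Fin n → ℚ) :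
    mperm m X = ∑ σ ∈ MultiAssignment.assignments (Fin γ) m, ∏ i, X i (σ i) := by
  unfold mperm MultiAssignment.assignments
  -- `mperm` decides its filter with `Nat.decidableForallFin`, not `Fintype.decidableForallFintype`
  congr!

theorem natCast_mul_mperm_of_eq_one {γ n : ℕ} (m : Fin n → ℕ) (i₀ : Fin γ)
    (X : Fin γ → Fin n → ℚ) (hX : ∀ i ≠ i₀, ∀ j, X i j = 1) :
    γ * mperm m X = #(MultiAssignment.assignments (Fin γ) m) * ∑ j, m j * X i₀ j := by
  simpa [mperm_eq_sum_assignments] using MultiAssignment.card_mul_sum_prod_of_eq_one m i₀ X hX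

theorem sum_mul_ite_one_sub_div_eq_zero {α K : Type*} [Fintype α] [Field K] [CharZero K]
    (m : α → ℕ) (k : α) (hk : m k ≠ 0) :
    ∑ j, (m j : K) * (if m j = m k then 1 - (∑ j, m j : K) / (#{j | m j = m k} * m k) else 1)
      = 0 := by
  set q := (∑ j, m j : K) / (#{j | m j = m k} * m k)
  have hlevel : ∑ j ∈ univ.filter (m · = m k), (m j : K) = #{j | m j = m k} * m k := by
    rw [sum_congr rfl fun j hj => by rw [(mem_filter.mp hj).2], sum_const, nsmul_eq_mul]
  have hc : (#{j | m j = m k} : K) ≠ 0 :=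
    Nat.cast_ne_zero.mpr (card_ne_zero_of_mem (a := k) (by simp))
  calc ∑ j, (m j : K) * (if m j = m k then 1 - q else 1)
      = ∑ j, (m j : K) - (∑ j ∈ univ.filter (m · = m k), (m j : K)) * q := by
        rw [sum_mul, sum_filter, ← sum_sub_distrib]
        refine sum_congr rfl fun j _ => ?_
        split_ifs <;> ring
    _ = 0 := by
        rw [hlevel, mul_div_cancel₀ _ (mul_ne_zero hc (Nat.cast_ne_zero.mpr hk)), sub_self]

/-- When the parts of `m` are not all equal, the matrix `B` whose last row
equals `1 - γ/(c·m_k)` in the columns where `m` is maximal and `1` elsewhere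
is a zero of the multipermanent. -/
theorem mperm_zero_of_not_all_equal (n : ℕ) (m : Fin n → ℕ)
    (hne : ∃ i j : Fin n, m i ≠ m j) (k : Fin n) (hk : ∀ i, m i ≤ m k) :
    mperm m
      (fun (i : Fin (∑ j, m j)) (j : Fin n) =>
        if i.val = (∑ j, m j) - 1 ∧ m j = m k then
          1 - (∑ j, m j : ℚ) / (((Finset.univ.filter (fun j : Fin n => m j = m k)).card : ℚ) * m k)
        else 1) = 0 := by
  have hmk : 0 < m k := by
    obtain ⟨i, j, hij⟩ := hne
    have := hk i
    have := hk j
    omega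
  have hγ : 0 < ∑ j, m j :=
    hmk.trans_le (single_le_sum (fun j _ => Nat.zero_le (m j)) (mem_univ k))
  have hγ' : ((∑ j, m j : ℕ) : ℚ) ≠ 0 := Nat.cast_ne_zero.mpr hγ.ne'
  rw [← mul_right_inj' hγ', mul_zero,
    natCast_mul_mperm_of_eq_one m ⟨(∑ j, m j) - 1, by omega⟩ _
      fun i hi j => if_neg fun h => hi (Fin.ext h.1)]
  simp only [true_and]
  rw [sum_mul_ite_one_sub_div_eq_zero m k hmk.ne', mul_zero]
end

section
/- For i ≠ i' in [γ] and j, j' in [n], the second partial derivative of mperm_m with respect to x_{i,j} and x_{i',j'}, evaluated at a matrix X, equals mperm_{m - e_j - e_{j'}}(X_{ii'}), where X_{ii'} is X with rows i and i' removed; and the second partial with respect to x_{i,j} and x_{i,j'} (same row i) is identically zero. -/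
/-- The multipermanent as a polynomial in the `γ·n` variables `x_{i,j}`. -/
noncomputable def mpermPoly (γ n : ℕ) (m : Fin n → ℕ) : MvPolynomial (Fin γ × Fin n) ℚ :=
  ∑ σ ∈ Finset.univ.filter
      (fun σ : Fin γ → Fin n => ∀ j, (Finset.univ.filter (fun i => σ i = j)).card = m j),
    ∏ i, MvPolynomial.X (i, σ i)

open Finset MvPolynomial

section PDeriv

variable {R σ ι : Type*} [CommSemiring R]

theorem MvPolynomial.pderiv_prod_X_of_forall_ne (s : Finset ι) (f : ι → σ) (v : σ)
    (hf : ∀ k ∈ s, f k ≠ v) : pderiv v (∏ k ∈ s, (X (f k) : MvPolynomial σ R)) = 0 :=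
  prod_induction _ (fun p => pderiv v p = 0)
    (fun p q hp hq => by rw [Derivation.leibniz, hp, hq, smul_zero, smul_zero, add_zero])
    (Derivation.map_one_eq_zero _) (fun k hk => pderiv_X_of_ne (hf k hk))

theorem MvPolynomial.pderiv_prod_X_of_injective {N : ℕ} (f : Fin (N + 1) → σ)
    (hf : Function.Injective f) (i : Fin (N + 1)) :
    pderiv (f i) (∏ k, (X (f k) : MvPolynomial σ R)) = ∏ q, X (f (i.succAbove q)) := by
  have hrest : pderiv (f i) (∏ q, (X (f (i.succAbove q)) : MvPolynomial σ R)) = 0 :=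
    pderiv_prod_X_of_forall_ne _ _ _ fun q _ => hf.ne (Fin.succAbove_ne i q)
  rw [Fin.prod_univ_succAbove _ i, Derivation.leibniz, hrest, pderiv_X_self, smul_zero,
    zero_add, smul_eq_mul, mul_one]

variable {τ : Type*} [DecidableEq τ]

theorem MvPolynomial.pderiv_prod_X_graph {N : ℕ} (e : Fin (N + 1) → ι)
    (he : Function.Injective e) (φ : Fin (N + 1) → τ) (i : Fin (N + 1)) (j : τ) :
    pderiv (e i, j) (∏ k, (X (e k, φ k) : MvPolynomial (ι × τ) R)) =
      if φ i = j then ∏ q, X (e (i.succAbove q), φ (i.succAbove q)) else 0 := by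
  split_ifs with h
  · subst h
    exact pderiv_prod_X_of_injective (fun k => (e k, φ k))
      (fun a b hab => he (Prod.ext_iff.mp hab).1) i
  · refine pderiv_prod_X_of_forall_ne _ _ _ fun k _ hk => h ?_
    obtain ⟨hki, hkj⟩ := Prod.ext_iff.mp hk
    rwa [← he hki]

theorem MvPolynomial.pderiv_sum_prod_X_graph {A : Type*} {N : ℕ} (S : Finset A)
    (φ : A → Fin (N + 1) → τ) (e : Fin (N + 1) → ι) (he : Function.Injective e)
    (i : Fin (N + 1)) (j : τ) :
    pderiv (e i, j) (∑ a ∈ S, ∏ k, (X (e k, φ a k) : MvPolynomial (ι × τ) R)) =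
      ∑ a ∈ S with φ a i = j, ∏ q, X (e (i.succAbove q), φ a (i.succAbove q)) := by
  simp only [map_sum, pderiv_prod_X_graph e he, sum_filter]

end PDeriv

theorem Fin.sum_filter_apply_eq {α M : Type*} [Fintype α] [DecidableEq α] [AddCommMonoid M]
    {N : ℕ} (i : Fin (N + 1)) (a : α) (P : (Fin (N + 1) → α) → Prop) [DecidablePred P]
    (f : (Fin (N + 1) → α) → M) :
    ∑ σ with P σ ∧ σ i = a, f σ =
      ∑ τ with P (i.insertNth a τ : Fin (N + 1) → α), f (i.insertNth a τ) := by
  have insertNth_removeNth_of_eq {σ : Fin (N + 1) → α} (h : σ i = a) :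
      i.insertNth a (i.removeNth σ) = σ := h ▸ i.insertNth_self_removeNth σ
  refine sum_nbij' i.removeNth (i.insertNth (α := fun _ => α) a) ?_ ?_ ?_ ?_ ?_ <;>
    simp +contextual [insertNth_removeNth_of_eq]

theorem Fin.card_filter_insertNth {β : Type*} [DecidableEq β] {N : ℕ} (i : Fin (N + 1)) (a : β)
    (τ : Fin N → β) (k : β) :
    #{x | (i.insertNth a τ : Fin (N + 1) → β) x = k} =
      #{x | τ x = k} + if k = a then 1 else 0 := by
  simp only [card_filter, Fin.sum_univ_succAbove _ i, Fin.insertNth_apply_same,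
    Fin.insertNth_apply_succAbove, add_comm, eq_comm]

theorem Finset.add_eq_of_forall_eq_tsub {ι : Type*} (s : Finset ι) {c d m : ι → ℕ}
    (h : ∀ k ∈ s, c k = m k - d k)
    (hsum : ∑ k ∈ s, c k + ∑ k ∈ s, d k = ∑ k ∈ s, m k) :
    ∀ k ∈ s, c k + d k = m k := by
  have hle : ∀ k ∈ s, m k ≤ c k + d k := fun k hk => h k hk ▸ le_tsub_add
  intro k hk
  exact ((sum_eq_sum_iff_of_le hle).mp (by rw [sum_add_distrib, hsum]) k hk).symm

theorem Fin.card_filter_insertNth_insertNth_eq_iff {β : Type*} [Fintype β] [DecidableEq β]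
    {N : ℕ} {m : β → ℕ} (hm : N + 2 = ∑ k, m k) (i : Fin (N + 2)) (p : Fin (N + 1))
    (a b : β) (τ : Fin N → β) :
    (∀ k, #{x | (i.insertNth a (p.insertNth b τ) : Fin (N + 2) → β) x = k} = m k) ↔
      ∀ k, #{x | τ x = k} = m k - (if k = a then 1 else 0) - if k = b then 1 else 0 := by
  simp only [Fin.card_filter_insertNth]
  refine ⟨fun h k => by have := h k; split_ifs at this ⊢ <;> omega, fun h k => ?_⟩
  have hcard : ∑ k, #{x | τ x = k} = N := by
    rw [← card_eq_sum_card_fiberwise fun x _ => mem_univ (τ x), card_univ, Fintype.card_fin]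
  have hsum : ∑ k, #{x | τ x = k} + ∑ k, ((if k = a then 1 else 0) + if k = b then 1 else 0) =
      ∑ k, m k := by
    rw [hcard, sum_add_distrib, sum_ite_eq', sum_ite_eq', ← hm]
    simp
  have := add_eq_of_forall_eq_tsub univ (fun k _ => (h k).trans (Nat.sub_sub _ _ _)) hsum k
    (mem_univ k)
  omega

theorem pderiv_mpermPoly {N n : ℕ} (m : Fin n → ℕ) (i : Fin (N + 1)) (j : Fin n) :
    pderiv (i, j) (mpermPoly (N + 1) n m) =
      ∑ τ with ∀ k, #{x | (i.insertNth j τ : Fin (N + 1) → Fin n) x = k} = m k,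
        ∏ q, X (i.succAbove q, τ q) := by
  rw [mpermPoly, pderiv_sum_prod_X_graph _ (fun σ => σ) (fun k => k) Function.injective_id,
    filter_filter, Fin.sum_filter_apply_eq]
  simp only [Fin.insertNth_apply_succAbove]

theorem mperm_pderiv_two_general (γ n : ℕ) (m : Fin n → ℕ) (hγ : γ + 2 = ∑ j, m j)
    (X : Fin (γ + 2) → Fin n → ℚ) (i i' : Fin (γ + 2))
    (p : Fin (γ + 1)) (hp : i' = i.succAbove p) (j j' : Fin n) :
    (MvPolynomial.eval (fun q : Fin (γ + 2) × Fin n => X q.1 q.2)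
        (MvPolynomial.pderiv (i', j')
          (MvPolynomial.pderiv (i, j) (mpermPoly (γ + 2) n m))) =
      mperm (fun k => m k - (if k = j then 1 else 0) - if k = j' then 1 else 0)
        (fun (r : Fin γ) c => X (i.succAbove (p.succAbove r)) c)) ∧
    MvPolynomial.pderiv (i, j') (MvPolynomial.pderiv (i, j) (mpermPoly (γ + 2) n m)) = 0 := by
  subst hp
  rw [pderiv_mpermPoly]
  refine ⟨?_, ?_⟩
  · rw [pderiv_sum_prod_X_graph _ (fun τ => τ) _ Fin.succAbove_right_injective p j',
      filter_filter, Fin.sum_filter_apply_eq, mperm,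
      filter_congr fun τ _ => Fin.card_filter_insertNth_insertNth_eq_iff hγ i p j j' τ]
    simp only [map_sum, map_prod, eval_X, Fin.insertNth_apply_succAbove]
  · rw [map_sum]
    exact sum_eq_zero fun τ _ =>
      pderiv_prod_X_of_forall_ne _ _ _ fun q _ h => Fin.succAbove_ne i q (Prod.ext_iff.mp h).1

/-- Second partial derivatives of the multipermanent: for `i ≠ i'` (with
`i' = i.succAbove p`) the second partial with respect to `x_{i,j}` and
`x_{i',j'}`, evaluated at `X`, is `mperm_{m - e_j - e_{j'}}` of `X` with rows
`i` and `i'` removed; and the second partial with respect to two variables in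
the same row `i` is identically zero. -/
theorem mperm_pderiv_two (γ n : ℕ) (m : Fin n → ℕ) (hγ : γ + 2 = ∑ j, m j)
    (X : Fin (γ + 2) → Fin n → ℚ) (i i' : Fin (γ + 2)) (hii' : i ≠ i')
    (p : Fin (γ + 1)) (hp : i' = i.succAbove p) (j j' : Fin n) :
    (MvPolynomial.eval (fun q : Fin (γ + 2) × Fin n => X q.1 q.2)
        (MvPolynomial.pderiv (i', j')
          (MvPolynomial.pderiv (i, j) (mpermPoly (γ + 2) n m))) =
      mperm (fun k => m k - (if k = j then 1 else 0) - if k = j' then 1 else 0)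
        (fun (r : Fin γ) c => X (i.succAbove (p.succAbove r)) c)) ∧
    MvPolynomial.pderiv (i, j') (MvPolynomial.pderiv (i, j) (mpermPoly (γ + 2) n m)) = 0 :=
  mperm_pderiv_two_general γ n m hγ X i i' p hp j j'
end

section
/- Let k be a field, f ∈ k[x_1,…,x_m] a polynomial, and F: k^m → M_n(k) an affine-linear map with f = det ∘ F. If y ∈ k^m satisfies f(y) = 0, then the Hessian matrix of f at y, namely (∂²f/∂x_h∂x_e (y))_{h,e}, factors as L · H_det(F(y)) · Lᵗ for some m×n² matrix L, where H_det(F(y)) is the Hessian of the n×n determinant polynomial at the singular matrix F(y); in particular rank(Hessian of f at y) ≤ rank(Hessian of det_n at F(y)). -/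
/-!
Write `f = det ∘ F` as `aeval g (detPoly k n)`, where `g` lists the entries of `F`. Applying the
chain rule twice gives `∂ₐ∂_b f = Σ_{q,r} (∂_r ∂_q det)(g) · ∂ₐ g_r · ∂_b g_q + Σ_q (∂_q det)(g) · ∂ₐ∂_b g_q`,
and the second sum vanishes because the entries of `F` are affine-linear. Evaluated at `y`, the
first sum is `Jᵀ · H_det(F(y)) · J` with `J` the Jacobian of `g` at `y`; the rank bound follows.
-/

open MvPolynomial Matrix

/-- The determinant of the generic `n × n` matrix, as a polynomial in the `n²`
variables `z_{i,j}`. -/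
noncomputable def detPoly (k : Type*) [CommRing k] (n : ℕ) : MvPolynomial (Fin n × Fin n) k :=
  (Matrix.of fun i j : Fin n => (X (i, j) : MvPolynomial (Fin n × Fin n) k)).det

/-- The Hessian matrix of a multivariate polynomial at a point. -/
noncomputable def hessianAt {k : Type*} [CommRing k] {ι : Type*}
    (f : MvPolynomial ι k) (y : ι → k) : Matrix ι ι k :=
  Matrix.of fun a b => eval y (pderiv a (pderiv b f))

namespace MvPolynomial

variable {R : Type*} [CommSemiring R] {σ τ : Type*}

lemma pderiv_pderiv_eq_zero_of_totalDegree_le_one [DecidableEq σ] {p : MvPolynomial σ R}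
    (hp : p.totalDegree ≤ 1) (i j : σ) : pderiv i (pderiv j p) = 0 := by
  ext d
  rw [coeff_pderiv, coeff_pderiv, coeff_eq_zero_of_totalDegree_lt, zero_mul, zero_mul, coeff_zero]
  rw [← Finsupp.degree_apply]
  simp only [map_add, Finsupp.degree_single]
  omega

lemma pderiv_aeval [Fintype τ] [DecidableEq σ] [DecidableEq τ] (g : τ → MvPolynomial σ R)
    (i : σ) (p : MvPolynomial τ R) :
    pderiv i (aeval g p) = ∑ q, aeval g (pderiv q p) * pderiv i (g q) := by
  induction p using MvPolynomial.induction_on with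
  | C a => simp
  | add p p' hp hp' => simp only [map_add, hp, hp', add_mul, Finset.sum_add_distrib]
  | mul_X p q hp =>
    simp only [map_mul, pderiv_mul, hp, pderiv_X, Pi.single_apply, mul_ite, mul_one, mul_zero,
      map_add, aeval_X, add_mul, ite_mul, zero_mul, Finset.sum_add_distrib, Finset.sum_mul,
      Finset.sum_ite_eq, Finset.mem_univ, if_true, mul_right_comm, apply_ite (aeval g), map_zero]

lemma eval_aeval (g : τ → MvPolynomial σ R) (y : σ → R) (p : MvPolynomial τ R) :
    eval y (aeval g p) = eval (fun q => eval y (g q)) p := by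
  simp only [← coe_aeval_eq_eval, aeval_eq_bind₁]
  exact aeval_bind₁ _ _ _

end MvPolynomial

section Hessian

variable {R : Type*} [CommRing R] {σ τ : Type*}

noncomputable def jacobianAt [DecidableEq σ] (g : τ → MvPolynomial σ R) (y : σ → R) :
    Matrix τ σ R :=
  of fun q i => eval y (pderiv i (g q))

theorem hessianAt_aeval_of_totalDegree_le_one [Fintype τ] [DecidableEq σ] [DecidableEq τ]
    {g : τ → MvPolynomial σ R} (hg : ∀ q, (g q).totalDegree ≤ 1) (p : MvPolynomial τ R)
    (y : σ → R) :
    hessianAt (aeval g p) y =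
      (jacobianAt g y)ᵀ * hessianAt p (fun q => eval y (g q)) * jacobianAt g y := by
  ext a b
  have second_chain_rule : pderiv a (pderiv b (aeval g p)) =
      ∑ q, ∑ r, aeval g (pderiv r (pderiv q p)) * pderiv a (g r) * pderiv b (g q) := by
    rw [pderiv_aeval, map_sum]
    refine Finset.sum_congr rfl fun q _ => ?_
    rw [pderiv_mul, pderiv_aeval, pderiv_pderiv_eq_zero_of_totalDegree_le_one (hg q), mul_zero,
      add_zero, Finset.sum_mul]
  simp only [hessianAt, jacobianAt, of_apply, second_chain_rule, map_sum, map_mul, eval_aeval,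
    mul_apply, transpose_apply, Finset.sum_mul]
  exact Finset.sum_congr rfl fun q _ => Finset.sum_congr rfl fun r _ => by ring

end Hessian

lemma aeval_detPoly {R S : Type*} [CommRing R] [CommRing S] [Algebra R S] {n : ℕ}
    (A : Matrix (Fin n) (Fin n) S) : aeval (fun q => A q.1 q.2) (detPoly R n) = A.det := by
  rw [detPoly, AlgHom.map_det]
  congr
  ext i j
  simp

theorem hessian_factorization_general (k : Type*) [Field k] (m n : ℕ)
    (f : MvPolynomial (Fin m) k) (F : Fin n → Fin n → MvPolynomial (Fin m) k)
    (hdeg : ∀ i j, (F i j).totalDegree ≤ 1)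
    (hf : (Matrix.of F).det = f)
    (y : Fin m → k) :
    (∃ L : Matrix (Fin m) (Fin n × Fin n) k,
        hessianAt f y =
          L * hessianAt (detPoly k n) (fun q : Fin n × Fin n => eval y (F q.1 q.2)) * Lᵀ) ∧
      (hessianAt f y).rank ≤
        (hessianAt (detPoly k n) (fun q : Fin n × Fin n => eval y (F q.1 q.2))).rank := by
  set g : Fin n × Fin n → MvPolynomial (Fin m) k := fun q => F q.1 q.2
  have hessian_eq := hessianAt_aeval_of_totalDegree_le_one (g := g) (fun q => hdeg q.1 q.2)
    (detPoly k n) y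
  rw [show aeval g (detPoly k n) = f from (aeval_detPoly (of F)).trans hf] at hessian_eq
  refine ⟨⟨(jacobianAt g y)ᵀ, by rwa [transpose_transpose]⟩, ?_⟩
  rw [hessian_eq]
  exact (rank_mul_le_left _ _).trans (rank_mul_le_right _ _)

/-- If `F` is an `n × n` matrix of affine-linear forms in `x_1, …, x_m` with
`det ∘ F = f` and `f(y) = 0`, then the Hessian of `f` at `y` factors as
`L · H · Lᵀ` where `H` is the Hessian of `det_n` at the singular matrix `F(y)`;
in particular its rank is at most the rank of `H`. -/
theorem hessian_factorization (k : Type*) [Field k] (m n : ℕ)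
    (f : MvPolynomial (Fin m) k) (F : Fin n → Fin n → MvPolynomial (Fin m) k)
    (hdeg : ∀ i j, (F i j).totalDegree ≤ 1)
    (hf : (Matrix.of F).det = f)
    (y : Fin m → k) (hy : eval y f = 0) :
    (∃ L : Matrix (Fin m) (Fin n × Fin n) k,
        hessianAt f y =
          L * hessianAt (detPoly k n) (fun q : Fin n × Fin n => eval y (F q.1 q.2)) * Lᵀ) ∧
      (hessianAt f y).rank ≤
        (hessianAt (detPoly k n) (fun q : Fin n × Fin n => eval y (F q.1 q.2))).rank :=
  hessian_factorization_general k m n f F hdeg hf y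
end

section
/- Let k be a field of characteristic zero and A a singular n×n matrix over k. Then the Hessian matrix of the determinant polynomial det_n (in n² variables), evaluated at A, has rank at most 2n. -/
open MvPolynomial Matrix

/-!
Choose `x ≠ 0` with `A x = 0` and `y ≠ 0` with `yᵀ A = 0`. Since `∂det/∂z_{i,j}` at `B` is the
cofactor `adj(B)_{j,i}`, the Hessian `H` pairs `U` and `V` to the coefficient of `t` in
`tr (U adj(A + tV))`. If `V x = 0` and `yᵀ V = 0`, then `A + tV` kills `x` and `yᵀ` over the
domain `k[t]`, so its adjugate is a multiple of `x yᵀ` and the pairing vanishes whenever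
`yᵀ U x = 0`. Thus `Hᵀ` maps the matrices `V` killing `x` and `yᵀ`, a subspace of codimension
at most `2n - 1` (because `yᵀ (V x) = (yᵀ V) x`), into the line spanned by `y ⊗ x`, and
`rank H ≤ (2n - 1) + 1`.
-/

open Module

namespace Matrix

variable {n R : Type*} [Fintype n] [DecidableEq n] [CommRing R] [IsDomain R]

theorem adjugate_apply_eq_zero_of_mulVec_eq_zero {B : Matrix n n R} {w : n → R} (hw : w ≠ 0)
    (hBw : B *ᵥ w = 0) {i : n} (hwi : w i = 0) (l : n) : adjugate B i l = 0 := by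
  rw [adjugate_apply]
  refine exists_mulVec_eq_zero_iff.mp ⟨w, hw, funext fun m => ?_⟩
  rcases eq_or_ne m l with rfl | hm
  · simp [mulVec, hwi]
  · simpa [mulVec, updateRow_ne hm] using congrFun hBw m

theorem mul_adjugate_apply_eq_of_mulVec_eq_zero {B : Matrix n n R} {x : n → R} (hdet : B.det = 0)
    (hBx : B *ᵥ x = 0) (i j l : n) : x i * adjugate B j l = x j * adjugate B i l := by
  set a : n → R := fun m => adjugate B m l
  have hBa : B *ᵥ a = 0 := funext fun m => by
    simpa [hdet, mul_apply, mulVec, dotProduct] using congrFun (congrFun (mul_adjugate B) m) l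
  -- `x i • a - a i • x` is a kernel vector vanishing at `i`: either it is zero or row `i` of
  -- the adjugate vanishes.
  have key : ∀ i j, x i * a j - x j * a i = 0 ∨ a i = 0 := by
    intro i j
    by_cases hw : x i • a - a i • x = 0
    · left
      have := congrFun hw j
      simp only [Pi.sub_apply, Pi.smul_apply, smul_eq_mul, Pi.zero_apply] at this
      linear_combination this
    · right
      refine adjugate_apply_eq_zero_of_mulVec_eq_zero hw ?_ (by simp [mul_comm]) l
      simp [mulVec_sub, mulVec_smul, hBa, hBx]
  rcases key i j with h | hi
  · linear_combination h
  rcases key j i with h | hj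
  · linear_combination -h
  simp only [a] at hi hj
  rw [hi, hj, mul_zero, mul_zero]

theorem trace_mul_adjugate_eq_zero {B U : Matrix n n R} {x y : n → R} (hx : x ≠ 0) (hy : y ≠ 0)
    (hBx : B *ᵥ x = 0) (hyB : y ᵥ* B = 0) (hU : y ⬝ᵥ (U *ᵥ x) = 0) :
    trace (U * adjugate B) = 0 := by
  have hdet : B.det = 0 := exists_mulVec_eq_zero_iff.mp ⟨x, hx, hBx⟩
  obtain ⟨i₀, hi₀⟩ := Function.ne_iff.mp hx
  obtain ⟨j₀, hj₀⟩ := Function.ne_iff.mp hy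
  have hrow (i j l : n) : y i * adjugate B l j = y j * adjugate B l i := by
    simpa [← adjugate_transpose] using mul_adjugate_apply_eq_of_mulVec_eq_zero (B := Bᵀ)
      (by rwa [det_transpose]) (by rwa [mulVec_transpose]) i j l
  have hentry (i j : n) : x i₀ * y j₀ * adjugate B j i = adjugate B i₀ j₀ * (y i * x j) := by
    linear_combination y j₀ * mul_adjugate_apply_eq_of_mulVec_eq_zero hdet hBx i₀ j i +
      x j * hrow j₀ i i₀
  have : x i₀ * y j₀ * trace (U * adjugate B) = adjugate B i₀ j₀ * (y ⬝ᵥ (U *ᵥ x)) := by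
    simp only [trace, diag, mul_apply, dotProduct, mulVec, Finset.mul_sum]
    refine Finset.sum_congr rfl fun i _ => Finset.sum_congr rfl fun j _ => ?_
    linear_combination U i j * hentry i j
  rw [hU, mul_zero] at this
  exact (mul_eq_zero.mp this).resolve_left (mul_ne_zero hi₀ hj₀)

theorem mem_span_singleton_of_forall_dotProduct_eq_zero {K ι : Type*} [Field K] [Fintype ι]
    [DecidableEq ι] {c z : ι → K} (h : ∀ u, c ⬝ᵥ u = 0 → z ⬝ᵥ u = 0) : z ∈ K ∙ c := by
  rcases eq_or_ne c 0 with rfl | hc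
  · have : z = 0 := funext fun i => by simpa using h (Pi.single i 1) (by simp)
    simp [this]
  obtain ⟨i, hi⟩ := Function.ne_iff.mp hc
  refine Submodule.mem_span_singleton.mpr ⟨z i / c i, funext fun j => ?_⟩
  have := h (c i • Pi.single j 1 - c j • Pi.single i 1) (by simp [dotProduct_sub, mul_comm])
  simp only [dotProduct_sub, dotProduct_smul, dotProduct_single, mul_one, smul_eq_mul] at this
  rw [Pi.smul_apply, smul_eq_mul, div_mul_eq_mul_div, div_eq_iff hi]
  linear_combination -this

theorem finrank_range_mulVec_prod_vecMul_add_one_le {K m n : Type*} [Field K] [Fintype m]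
    [Fintype n] [DecidableEq m] (x : n → K) {y : m → K} (hy : y ≠ 0) :
    finrank K (LinearMap.range (((mulVecBilin K K).flip x).prod (vecMulBilin K K y))) + 1 ≤
      Fintype.card m + Fintype.card n := by
  -- the range lies in the kernel of `(a, b) ↦ y ⬝ a - b ⬝ x`, since `y ⬝ (V x) = (y V) ⬝ x`
  set φ : Dual K ((m → K) × (n → K)) :=
    (dotProductBilin K K y).coprod (-(dotProductBilin K K).flip x)
  have hrange : LinearMap.range (((mulVecBilin K K).flip x).prod (vecMulBilin K K y)) ≤
      LinearMap.ker φ := by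
    rintro _ ⟨V, rfl⟩
    simp [φ, dotProduct_mulVec]
  have hφ : φ ≠ 0 := by
    obtain ⟨i, hi⟩ := Function.ne_iff.mp hy
    intro h
    exact hi (by simpa [φ] using LinearMap.congr_fun h (Pi.single i 1, 0))
  have hker := Dual.finrank_ker_add_one_of_ne_zero hφ
  rw [finrank_prod, finrank_fintype_fun_eq_card, finrank_fintype_fun_eq_card] at hker
  have := Submodule.finrank_mono hrange
  omega

end Matrix

open LinearMap in
theorem LinearMap.finrank_range_le_finrank_range_add {K M N P : Type*} [DivisionRing K]
    [AddCommGroup M] [Module K M] [AddCommGroup N] [Module K N] [AddCommGroup P] [Module K P]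
    [FiniteDimensional K M] [FiniteDimensional K N] (f : M →ₗ[K] N) (g : M →ₗ[K] P)
    {T : Submodule K N} (h : (ker g).map f ≤ T) :
    finrank K (range f) ≤ finrank K (range g) + finrank K T := by
  have hf := finrank_range_add_finrank_ker f
  have hg := finrank_range_add_finrank_ker g
  have hfg := finrank_range_add_finrank_ker (f.domRestrict (ker g))
  rw [range_domRestrict] at hfg
  have hT := Submodule.finrank_mono h
  have hker : finrank K (ker (f.domRestrict (ker g))) ≤ finrank K (ker f) := by
    rw [ker_domRestrict, ← Submodule.finrank_map_subtype_eq, Submodule.map_comap_subtype]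
    exact Submodule.finrank_mono inf_le_right
  omega

namespace MvPolynomial

variable {σ R : Type*} [CommSemiring R]

theorem coeff_zero_aeval_C_add_X_mul_C (g : MvPolynomial σ R) (a v : σ → R) :
    (aeval (fun i => Polynomial.C (a i) + Polynomial.C (v i) * Polynomial.X) g).coeff 0 =
      eval a g := by
  rw [Polynomial.coeff_zero_eq_eval_zero, ← Polynomial.coe_aeval_eq_eval, ← AlgHom.comp_apply,
    comp_aeval, ← coe_aeval_eq_eval]
  simp

theorem coeff_one_aeval_C_add_X_mul_C [Fintype σ] (g : MvPolynomial σ R) (a v : σ → R) :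
    (aeval (fun i => Polynomial.C (a i) + Polynomial.C (v i) * Polynomial.X) g).coeff 1 =
      (fun i => eval a (pderiv i g)) ⬝ᵥ v := by
  classical
  induction g using MvPolynomial.induction_on with
  | C r => simp
  | add f g hf hg => simp [hf, hg, dotProduct, add_mul, Finset.sum_add_distrib]
  | mul_X f p hf =>
    simp only [map_mul, aeval_X, mul_add, ← mul_assoc, Polynomial.coeff_add,
      Polynomial.coeff_mul_C, Polynomial.coeff_mul_X, hf, coeff_zero_aeval_C_add_X_mul_C,
      Derivation.leibniz, pderiv_X, smul_eq_mul, map_add, eval_X]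
    simp [dotProduct, add_mul, Finset.sum_add_distrib, Pi.single_apply, Finset.mul_sum,
      mul_comm _ (a p), mul_assoc, add_comm]

end MvPolynomial

section detPoly

variable {R S : Type*} [CommRing R] [CommRing S] {n : ℕ}

theorem aeval_detPoly_s11 [Algebra R S] (f : Fin n × Fin n → S) :
    aeval f (detPoly R n) = (of fun i j => f (i, j)).det := by
  rw [detPoly, AlgHom.map_det]
  congr
  ext
  simp

theorem map_detPoly (φ : R →+* S) : map φ (detPoly R n) = detPoly S n := by
  rw [detPoly, RingHom.map_det]
  congr
  ext
  simp

theorem aeval_pderiv_detPoly [Algebra R S] (B : Matrix (Fin n) (Fin n) S) (i j : Fin n) :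
    aeval (fun q => B q.1 q.2) (pderiv (i, j) (detPoly R n)) = adjugate B j i := by
  rw [aeval_def, eval₂_eq_eval_map, ← pderiv_map, map_detPoly, ← mul_one (eval _ _),
    ← dotProduct_single (fun q => eval _ (pderiv q (detPoly S n))),
    ← coeff_one_aeval_C_add_X_mul_C, aeval_detPoly_s11]
  have hB : (of fun a b => Polynomial.C (B a b) +
        Polynomial.C ((Pi.single (i, j) 1 : Fin n × Fin n → S) (a, b)) * Polynomial.X) =
      (B.map Polynomial.C).updateRow i (B.map Polynomial.C i + Polynomial.X • Pi.single j 1) := by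
    ext a b
    rcases eq_or_ne a i with rfl | ha
    · rcases eq_or_ne b j with rfl | hb <;> simp [Pi.single_apply, *, mul_comm]
    · simp [ha]
  have hmap : (B.map Polynomial.C).updateRow i (Pi.single j 1) =
      (B.updateRow i (Pi.single j 1)).map Polynomial.C := by
    ext a b
    rcases eq_or_ne a i with rfl | ha
    · rcases eq_or_ne b j with rfl | hb <;> simp [*]
    · simp [ha]
  rw [hB, det_updateRow_add, updateRow_eq_self, det_updateRow_smul, hmap, ← RingHom.mapMatrix_apply,
    ← RingHom.mapMatrix_apply, ← RingHom.map_det, ← RingHom.map_det, ← adjugate_apply]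
  simp

theorem dotProduct_transpose_hessianAt_detPoly_mulVec_eq_zero [IsDomain R]
    {A U V : Matrix (Fin n) (Fin n) R} {x y : Fin n → R} (hx : x ≠ 0) (hy : y ≠ 0)
    (hAx : A *ᵥ x = 0) (hyA : y ᵥ* A = 0) (hVx : V *ᵥ x = 0) (hyV : y ᵥ* V = 0)
    (hU : y ⬝ᵥ (U *ᵥ x) = 0) :
    (fun q => U q.1 q.2) ⬝ᵥ
      ((hessianAt (detPoly R n) fun q => A q.1 q.2)ᵀ *ᵥ fun q => V q.1 q.2) = 0 := by
  set B : Matrix (Fin n) (Fin n) (Polynomial R) :=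
    A.map Polynomial.C + (Polynomial.X : Polynomial R) • V.map Polynomial.C with hB
  have hC (v : Fin n → R) (hv : v ≠ 0) : Polynomial.C ∘ v ≠ 0 := fun h =>
    hv (funext fun i => Polynomial.C_injective (by simpa using congrFun h i))
  have htrace : trace (U.map Polynomial.C * adjugate B) = 0 := by
    refine trace_mul_adjugate_eq_zero (hC x hx) (hC y hy) ?_ ?_ ?_
    · ext i
      simp [hB, add_mulVec, smul_mulVec, ← RingHom.map_mulVec, hAx, hVx]
    · ext j
      simp [hB, vecMul_add, vecMul_smul, ← RingHom.map_vecMul, hyA, hyV]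
    · have hUx : U.map Polynomial.C *ᵥ (Polynomial.C ∘ x) = Polynomial.C ∘ (U *ᵥ x) :=
        funext fun i => (RingHom.map_mulVec _ _ _ i).symm
      rw [hUx, ← RingHom.map_dotProduct, hU, map_zero]
  calc _ = ∑ p : Fin n × Fin n, U p.1 p.2 * (adjugate B p.2 p.1).coeff 1 := by
        refine Finset.sum_congr rfl fun p _ => ?_
        have hline : (fun q : Fin n × Fin n => B q.1 q.2) = fun q =>
            Polynomial.C (A q.1 q.2) + Polynomial.C (V q.1 q.2) * Polynomial.X := by
          ext q : 1
          simp [hB, Polynomial.X_mul_C]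
        rw [← aeval_pderiv_detPoly (R := R), hline, Prod.mk.eta, coeff_one_aeval_C_add_X_mul_C]
        rfl
    _ = (trace (U.map Polynomial.C * adjugate B)).coeff 1 := by
        simp [trace, mul_apply, Fintype.sum_prod_type]
    _ = 0 := by rw [htrace, Polynomial.coeff_zero]

end detPoly

theorem rank_hessian_det_le_general (k : Type*) [Field k] (n : ℕ)
    (A : Matrix (Fin n) (Fin n) k) (hA : A.det = 0) :
    (hessianAt (detPoly k n) (fun q : Fin n × Fin n => A q.1 q.2)).rank ≤ 2 * n := by
  obtain ⟨x, hx, hAx⟩ := exists_mulVec_eq_zero_iff.mpr hA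
  obtain ⟨y, hy, hyA⟩ := exists_vecMul_eq_zero_iff.mpr hA
  set H := hessianAt (detPoly k n) fun q : Fin n × Fin n => A q.1 q.2
  set g := ((mulVecBilin k k).flip x).prod (vecMulBilin k k y)
  set f := Hᵀ.mulVecLin ∘ₗ (LinearEquiv.curry k k (Fin n) (Fin n)).symm.toLinearMap
  set c : Fin n × Fin n → k := fun q => y q.1 * x q.2
  have hmaps : (LinearMap.ker g).map f ≤ k ∙ c := by
    rintro _ ⟨V, hV, rfl⟩
    obtain ⟨hVx, hyV⟩ := Prod.ext_iff.mp hV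
    refine mem_span_singleton_of_forall_dotProduct_eq_zero fun u hu => ?_
    rw [dotProduct_comm]
    refine dotProduct_transpose_hessianAt_detPoly_mulVec_eq_zero (U := of (Function.curry u))
      hx hy hAx hyA hVx hyV ?_
    rw [← hu]
    simp [c, dotProduct, mulVec, Fintype.sum_prod_type, Finset.mul_sum, mul_comm, mul_left_comm]
  calc H.rank = finrank k (LinearMap.range f) := by
        rw [← rank_transpose, LinearMap.range_comp_of_range_eq_top _ (LinearEquiv.range _)]
        rfl
    _ ≤ finrank k (LinearMap.range g) + finrank k (k ∙ c) :=
        f.finrank_range_le_finrank_range_add g hmaps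
    _ ≤ 2 * n := by
        have hg : finrank k (LinearMap.range g) + 1 ≤ n + n := by
          simpa using finrank_range_mulVec_prod_vecMul_add_one_le x hy
        have hspan := finrank_span_le_card (R := k) ({c} : Set _)
        simp only [Set.toFinset_singleton, Finset.card_singleton] at hspan
        omega

/-- (Mignon–Ressayre) In characteristic zero, the Hessian of the determinant
polynomial at a singular matrix `A` has rank at most `2n`. -/
theorem rank_hessian_det_le (k : Type*) [Field k] [CharZero k] (n : ℕ)
    (A : Matrix (Fin n) (Fin n) k) (hA : A.det = 0) :
    (hessianAt (detPoly k n) (fun q : Fin n × Fin n => A q.1 q.2)).rank ≤ 2 * n :=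
  rank_hessian_det_le_general k n A hA
end

section
/- Let k be a field of characteristic zero, f ∈ k[x_1,…,x_m], and y ∈ k^m with f(y) = 0. Then the determinantal complexity of f is at least rank(Hessian of f at y)/2. -/
open MvPolynomial Matrix

/-- A determinantal representation of `f` of size `N`: an `N × N` matrix of
affine-linear forms whose determinant is `f`. -/
def IsDetRep {k : Type*} [CommRing k] {m : ℕ} (f : MvPolynomial (Fin m) k) (N : ℕ)
    (F : Fin N → Fin N → MvPolynomial (Fin m) k) : Prop :=
  (∀ i j, (F i j).totalDegree ≤ 1) ∧ (Matrix.of F).det = f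

/-!
Write `f = det G` with `G` affine-linear. The entries of `G` have vanishing second derivatives,
so the Hessian of `f` at `y` is the Gram matrix, over the first-derivative matrices `∂ₐG(y)`,
of the second derivative of `det` at the singular matrix `M = G(y)`. Pick `c ≠ 0` with
`M c = 0` and `c p ≠ 0`. For a matrix `M'` agreeing with `M` outside two rows `i ≠ j`,
`adjugate M' * M' = det M' • 1` applied to `c` shows that `c p * det M'` is a sum of two terms,
each a dot product with `c` times an adjugate entry. Summing, `c p` times the Hessian becomes
`U * Wᵀ + W * Uᵀ` with `U` and `W` of width `N`, hence has rank at most `2N`.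
-/

namespace Matrix

variable {R n : Type*} [CommRing R] [Fintype n] [DecidableEq n]

/-- The second derivative of `det` at `M` in the directions `X` and `Z`, i.e. the coefficient
of `s * t` in `det (M + s • X + t • Z)`. -/
def detHessian (M X Z : Matrix n n R) : R :=
  ∑ j, ∑ i ∈ Finset.univ.erase j, ((M.updateRow j (Z j)).updateRow i (X i)).det

theorem _root_.RingHom.map_detHessian {S : Type*} [CommRing S] (φ : R →+* S)
    (M X Z : Matrix n n R) :
    φ (detHessian M X Z) = detHessian (M.map φ) (X.map φ) (Z.map φ) := by
  simp only [detHessian, map_sum, RingHom.map_det, RingHom.mapMatrix_apply, map_updateRow]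
  rfl

theorem adjugate_updateRow_apply_self (A : Matrix n n R) (p i : n) (x : n → R) :
    adjugate (A.updateRow i x) p i = adjugate A p i := by
  rw [adjugate_apply, adjugate_apply, updateRow_idem]

theorem mul_det_updateRow_updateRow {M : Matrix n n R} {c : n → R} (hc : M *ᵥ c = 0) (p : n)
    {i j : n} (hij : i ≠ j) (x z : n → R) :
    c p * ((M.updateRow j z).updateRow i x).det
      = (x ⬝ᵥ c) * adjugate (M.updateRow j z) p i
        + (z ⬝ᵥ c) * adjugate (M.updateRow i x) p j := by
  set M' := (M.updateRow j z).updateRow i x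
  have hM'c : M' *ᵥ c = Pi.single i (x ⬝ᵥ c) + Pi.single j (z ⬝ᵥ c) := by
    ext r
    change M' r ⬝ᵥ c = _
    rcases eq_or_ne r i with rfl | hri
    · simp [M', hij]
    rcases eq_or_ne r j with rfl | hrj
    · simp [M', hri]
    · simp only [M', updateRow_ne hri, updateRow_ne hrj, Pi.add_apply,
        Pi.single_eq_of_ne hri, Pi.single_eq_of_ne hrj, add_zero]
      exact congrFun hc r
  have hadj : adjugate M' *ᵥ (M' *ᵥ c) = M'.det • c := by
    rw [mulVec_mulVec, adjugate_mul, smul_mulVec, one_mulVec]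
  have := congrFun hadj p
  simp only [hM'c, mulVec_add, Pi.add_apply, mulVec_single, Pi.smul_apply, smul_eq_mul,
    col_apply, op_smul_eq_mul] at this
  have hM' : M' = (M.updateRow i x).updateRow j z := updateRow_comm _ hij.symm _ _
  rw [mul_comm, ← this, adjugate_updateRow_apply_self, hM', adjugate_updateRow_apply_self]
  ring

/-- The derivative of `adjugate` at `M` in the direction `X`. -/
def adjugateDeriv (M X : Matrix n n R) : Matrix n n R :=
  of fun p i => ∑ j ∈ Finset.univ.erase i, adjugate (M.updateRow j (X j)) p i

theorem mul_detHessian {M : Matrix n n R} {c : n → R} (hc : M *ᵥ c = 0) (p : n)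
    (X Z : Matrix n n R) :
    c p * detHessian M X Z
      = (X *ᵥ c) ⬝ᵥ adjugateDeriv M Z p + (Z *ᵥ c) ⬝ᵥ adjugateDeriv M X p := by
  have hswap : ∑ j, ∑ i ∈ Finset.univ.erase j, (X i ⬝ᵥ c) * adjugate (M.updateRow j (Z j)) p i
      = (X *ᵥ c) ⬝ᵥ adjugateDeriv M Z p := by
    rw [Finset.sum_comm' (t' := Finset.univ) (s' := fun i => Finset.univ.erase i)
      fun j i => by simp [ne_comm]]
    simp only [dotProduct, adjugateDeriv, of_apply, Finset.mul_sum, mulVec]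
  simp only [detHessian, Finset.mul_sum]
  rw [Finset.sum_congr rfl fun j _ => Finset.sum_congr rfl fun i hi =>
    mul_det_updateRow_updateRow hc p (Finset.mem_erase.mp hi).1 (X i) (Z j)]
  simp only [Finset.sum_add_distrib, hswap, ← Finset.mul_sum]
  rfl

end Matrix

namespace Derivation

variable {R A : Type*} [CommSemiring R] [CommRing A] [Algebra R A] (D : Derivation R A A)

theorem map_prod {ι : Type*} [DecidableEq ι] (s : Finset ι) (g : ι → A) :
    D (∏ i ∈ s, g i) = ∑ i ∈ s, (∏ j ∈ s.erase i, g j) * D (g i) := by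
  induction s using Finset.induction_on with
  | empty => simp
  | insert x s hx ih =>
    rw [Finset.prod_insert hx, leibniz, ih, Finset.sum_insert hx, Finset.erase_insert hx,
      smul_eq_mul, smul_eq_mul, Finset.mul_sum, add_comm]
    congr 1
    refine Finset.sum_congr rfl fun i hi => ?_
    rw [Finset.erase_insert_of_ne (ne_of_mem_of_not_mem hi hx).symm,
      Finset.prod_insert fun h => hx (Finset.mem_of_mem_erase h)]
    ring

theorem map_det {n : Type*} [Fintype n] [DecidableEq n] (G : Matrix n n A) :
    D G.det = ∑ r, (G.updateRow r fun l => D (G r l)).det := by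
  simp only [det_apply', map_sum]
  rw [Finset.sum_comm]
  refine Finset.sum_congr rfl fun σ _ => ?_
  rw [← zsmul_eq_mul, map_zsmul, map_prod, Finset.smul_sum]
  conv_rhs => rw [← Equiv.sum_comp σ]
  refine Finset.sum_congr rfl fun j _ => ?_
  rw [zsmul_eq_mul, ← Finset.mul_prod_erase _ _ (Finset.mem_univ j)]
  simp only [updateRow_apply, if_true]
  rw [Finset.prod_congr rfl fun i hi =>
    if_neg fun h => (Finset.mem_erase.mp hi).1 (σ.injective h)]
  ring

theorem map_map_det {n : Type*} [Fintype n] [DecidableEq n] (D₁ D₂ : Derivation R A A)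
    {G : Matrix n n A} (hG : ∀ i j, D₁ (D₂ (G i j)) = 0) :
    D₁ (D₂ G.det) = G.detHessian (G.map D₁) (G.map D₂) := by
  rw [map_det, map_sum, detHessian]
  refine Finset.sum_congr rfl fun j _ => ?_
  rw [map_det, ← Finset.add_sum_erase _ _ (Finset.mem_univ j),
    det_eq_zero_of_row_eq_zero j fun l => by simp [hG], zero_add]
  refine Finset.sum_congr rfl fun i hi => ?_
  rw [updateRow_ne (Finset.mem_erase.mp hi).1]
  rfl

end Derivation

theorem MvPolynomial.pderiv_pderiv_eq_zero_of_totalDegree_le_one_s12 {R σ : Type*} [CommSemiring R]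
    {q : MvPolynomial σ R} (hq : q.totalDegree ≤ 1) (a b : σ) :
    pderiv a (pderiv b q) = 0 := by
  ext d
  rw [coeff_pderiv, coeff_pderiv, coeff_eq_zero_of_totalDegree_lt, zero_mul, zero_mul, coeff_zero]
  rw [← Finsupp.degree_apply, map_add, map_add, Finsupp.degree_single, Finsupp.degree_single]
  omega

theorem Matrix.rank_detHessian_le_of_det_eq_zero {K n ι : Type*} [Field K] [Fintype n]
    [DecidableEq n] [Fintype ι] {M : Matrix n n K} (hM : M.det = 0) (X : ι → Matrix n n K) :
    (of fun a b => detHessian M (X a) (X b)).rank ≤ 2 * Fintype.card n := by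
  obtain ⟨c, hc0, hc⟩ := exists_mulVec_eq_zero_iff.mpr hM
  obtain ⟨p, hp⟩ := Function.ne_iff.mp hc0
  set U : Matrix ι n K := of fun a => X a *ᵥ c
  set W : Matrix ι n K := of fun a => adjugateDeriv M (X a) p
  have hfactor :
      c p • of (fun a b => detHessian M (X a) (X b)) = fromCols U W * fromRows Wᵀ Uᵀ := by
    ext a b
    rw [fromCols_mul_fromRows]
    simp [mul_detHessian hc, U, W, mul_apply, dotProduct, mul_comm]
  calc (of fun a b => detHessian M (X a) (X b)).rank
      = (fromCols U W * fromRows Wᵀ Uᵀ).rank := by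
        rw [← hfactor, rank_smul_of_mem_nonZeroDivisors _ (mem_nonZeroDivisors_of_ne_zero hp)]
    _ ≤ Fintype.card (n ⊕ n) := (rank_mul_le_left _ _).trans (rank_le_card_width _)
    _ = 2 * Fintype.card n := by rw [Fintype.card_sum, two_mul]

theorem dc_ge_half_rank_hessian_general (k : Type*) [Field k] (m : ℕ)
    (f : MvPolynomial (Fin m) k) (y : Fin m → k) (hy : eval y f = 0)
    (N : ℕ) (F : Fin N → Fin N → MvPolynomial (Fin m) k) (hF : IsDetRep f N F) :
    (hessianAt f y).rank ≤ 2 * N := by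
  obtain ⟨hdeg, rfl⟩ := hF
  have hsing : ((of F).map (eval y)).det = 0 := by
    rw [← RingHom.mapMatrix_apply, ← RingHom.map_det, hy]
  have hhess : hessianAt (of F).det y = of fun a b => detHessian ((of F).map (eval y))
      (((of F).map (pderiv a)).map (eval y)) (((of F).map (pderiv b)).map (eval y)) := by
    ext a b
    rw [hessianAt, of_apply, of_apply, Derivation.map_map_det (G := of F) _ _ fun i j =>
      pderiv_pderiv_eq_zero_of_totalDegree_le_one_s12 (hdeg i j) a b, RingHom.map_detHessian]
  simpa [hhess] using rank_detHessian_le_of_det_eq_zero hsing _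

/-- (Mignon–Ressayre bound) In characteristic zero, if `f(y) = 0` then the
determinantal complexity of `f` is at least half the rank of the Hessian of
`f` at `y`: every determinantal representation of `f` has size `N` with
`rank(Hessian) ≤ 2N`. -/
theorem dc_ge_half_rank_hessian (k : Type*) [Field k] [CharZero k] (m : ℕ)
    (f : MvPolynomial (Fin m) k) (y : Fin m → k) (hy : eval y f = 0)
    (N : ℕ) (F : Fin N → Fin N → MvPolynomial (Fin m) k) (hF : IsDetRep f N F) :
    (hessianAt f y).rank ≤ 2 * N :=
  dc_ge_half_rank_hessian_general k m f y hy N F hF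
end

section
/- Let n ≥ 3, m ≥ 2 and let R be the n×n matrix over ℚ with R_{1,1} = 2(m-1)(n-1), R_{1,j} = R_{j,1} = m(n-2) for j ≥ 2, R_{j,j} = -2(m-1) for j ≥ 2, and R_{i,j} = -2m for distinct i,j ≥ 2. Then R is invertible. -/
/-!
The matrix is bordered: a constant first row and column around `2 I - 2m J`. If `R v = 0`,
summing the last `n - 1` equations expresses the sum of the tail of `v` through its head `x`,
and the first equation then forces `-(n - 1) (m n - 2)² x = 0`; so `x = 0`, hence the tail sum
vanishes, and then each tail entry does.
-/

open Matrix

variable {K : Type*} [Field K]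

def borderedMatrix (n : ℕ) (a b d e : K) : Matrix (Fin n) (Fin n) K :=
  Matrix.of fun i j =>
    if i.val = 0 ∧ j.val = 0 then a
    else if i.val = 0 ∨ j.val = 0 then b
    else if i = j then d
    else e

section

variable {k : ℕ} (a b d e : K) (v : Fin (k + 1) → K)

theorem borderedMatrix_mulVec_zero :
    (borderedMatrix (k + 1) a b d e *ᵥ v) 0 = a * v 0 + b * ∑ j : Fin k, v j.succ := by
  simp [borderedMatrix, mulVec, dotProduct, Fin.sum_univ_succ, Finset.mul_sum]

theorem borderedMatrix_mulVec_succ (i : Fin k) :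
    (borderedMatrix (k + 1) a b d e *ᵥ v) i.succ
      = b * v 0 + (d - e) * v i.succ + e * ∑ j : Fin k, v j.succ := by
  have hrow : ∀ j : Fin k, (if i = j then d else e) * v j.succ
      = e * v j.succ + if i = j then (d - e) * v i.succ else 0 := by
    intro j
    split_ifs with h
    · rw [h]; ring
    · ring
  simp only [borderedMatrix, mulVec, dotProduct, Fin.sum_univ_succ, of_apply, Fin.val_zero,
    Fin.val_succ, Nat.succ_ne_zero, and_false, and_true, false_or, if_false, if_true,
    Fin.succ_inj, hrow, Finset.sum_add_distrib, Finset.sum_ite_eq, Finset.mem_univ,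
    Finset.mul_sum]
  ring

end

theorem borderedMatrix_det_ne_zero {k : ℕ} {a b d e : K} (hde : d ≠ e)
    (hsum : d + (k - 1) * e ≠ 0) (hdisc : (d + (k - 1) * e) * a ≠ k * b ^ 2) :
    (borderedMatrix (k + 1) a b d e).det ≠ 0 := by
  rw [Ne, ← exists_mulVec_eq_zero_iff]
  rintro ⟨v, hv_ne, hv⟩
  set S := ∑ j : Fin k, v j.succ
  have hhead : a * v 0 + b * S = 0 := by
    rw [← borderedMatrix_mulVec_zero a b d e v, hv, Pi.zero_apply]
  have htail : ∀ i : Fin k, b * v 0 + (d - e) * v i.succ + e * S = 0 := fun i => by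
    rw [← borderedMatrix_mulVec_succ a b d e v i, hv, Pi.zero_apply]
  have htail_sum : k * b * v 0 + (d + (k - 1) * e) * S = 0 := by
    have := Finset.sum_eq_zero (s := Finset.univ) fun i _ => htail i
    simp only [Finset.sum_add_distrib, Finset.sum_const, Finset.card_univ, Fintype.card_fin,
      nsmul_eq_mul, ← Finset.mul_sum] at this
    linear_combination this
  have hx : v 0 = 0 := by
    have h : ((d + (k - 1) * e) * a - k * b ^ 2) * v 0 = 0 := by
      linear_combination (d + (k - 1) * e) * hhead - b * htail_sum
    simpa [sub_ne_zero.mpr hdisc] using h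
  have hS : S = 0 := by
    simpa [hx, hsum] using htail_sum
  refine hv_ne (funext fun i => Fin.cases hx (fun i => ?_) i)
  have h := htail i
  rw [hx, hS] at h
  simpa [sub_ne_zero.mpr hde] using h

/-- The block `R^{(2)}` of the Hessian of the multipermanent: the `n × n`
matrix with `(1,1)` entry `2(m-1)(n-1)`, entries `m(n-2)` elsewhere in the
first row and column, diagonal entries `-2(m-1)` outside the first, and `-2m`
in all remaining positions, is invertible for `n ≥ 3`, `m ≥ 2`. -/
theorem mperm_block_invertible (m n : ℕ) (hn : 3 ≤ n) (hm : 2 ≤ m) :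
    IsUnit (Matrix.det (Matrix.of fun i j : Fin n =>
      if i.val = 0 ∧ j.val = 0 then 2 * ((m : ℚ) - 1) * ((n : ℚ) - 1)
      else if i.val = 0 ∨ j.val = 0 then (m : ℚ) * ((n : ℚ) - 2)
      else if i = j then -2 * ((m : ℚ) - 1)
      else -2 * (m : ℚ))) := by
  obtain ⟨k, rfl⟩ : ∃ k, n = k + 1 := ⟨n - 1, by omega⟩
  have hk : (2 : ℚ) ≤ k := by exact_mod_cast (by omega : 2 ≤ k)
  have hm' : (2 : ℚ) ≤ m := by exact_mod_cast hm
  refine isUnit_iff_ne_zero.mpr (borderedMatrix_det_ne_zero (k := k) ?_ ?_ ?_) <;> push_cast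
  · linarith
  · nlinarith
  · -- the difference of the two sides is `-k (m (k + 1) - 2)²`
    nlinarith [mul_pos (by linarith : (0 : ℚ) < k) (by nlinarith : (0 : ℚ) < m * (k + 1) - 2)]
end

section
/- For every composition m = (m_1,…,m_n), the determinantal complexity of mperm_m is at most (Π_{i=1}^n (m_i + 1)) - 1; i.e., there is a square matrix of that size with affine-linear entries in the variables x_{i,j} whose determinant equals mperm_m (possibly after negating one row). -/
open MvPolynomial Matrix

/-! Sub-multisets of `{1^{m_1}, …, n^{m_n}}` are the vectors `t ≤ m`; let `H` be the matrix on them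
with entry `x_{|t|+1, j}` at `(t, t + e_j)`. A path from `0` to `m` in the Hasse diagram is a word
of content `m`, so `(H ^ γ) 0 m = mperm_m`. As `H` is nilpotent, `det (1 + H) = 1` and
`adj (1 + H) = ∑ₖ (-H) ^ k`, whose `(0, m)` entry is `± mperm_m`. This entry is, up to sign, the
minor of `1 + H` without row `m` and column `0`, i.e. the paper's matrix with top and bottom
identified; negating one row fixes the sign. -/

open Finset

namespace Matrix

variable {ι R : Type*} [Fintype ι] [DecidableEq ι] [CommRing R]

-- Over a reduced ring the unit `charpolyRev N = det (1 - X • N)` is the constant `1`;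
-- evaluate it at `X = -1`.
theorem det_one_add_of_isNilpotent [IsReduced R] {N : Matrix ι ι R} (hN : IsNilpotent N) :
    (1 + N).det = 1 := by
  have hrev : N.charpolyRev = 1 := by
    obtain ⟨-, hdiv⟩ := Polynomial.isUnit_iff'.mp (isUnit_charpolyRev_of_isNilpotent hN)
    have hdiv0 : N.charpolyRev /ₘ Polynomial.X = 0 :=
      Polynomial.ext fun i => (Polynomial.isNilpotent_iff.mp hdiv i).eq_zero
    rw [← Polynomial.modByMonic_add_div N.charpolyRev Polynomial.X, Polynomial.modByMonic_X,
      hdiv0, mul_zero, add_zero, eval_charpolyRev, map_one]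
  have := congr_arg (Polynomial.eval (-1)) hrev
  rw [charpolyRev, ← Polynomial.coe_evalRingHom, RingHom.map_det] at this
  convert this using 2
  · ext i j
    rcases eq_or_ne i j with rfl | h <;> simp [*]
  · simp

theorem adjugate_one_add_of_pow_eq_zero [IsReduced R] {N : Matrix ι ι R} {k : ℕ}
    (hN : N ^ k = 0) : (1 + N).adjugate = ∑ i ∈ range k, (-N) ^ i := by
  have hinv : (1 + N) * ∑ i ∈ range k, (-N) ^ i = 1 := by
    rw [← sub_neg_eq_add, mul_neg_geom_sum, neg_pow, hN, mul_zero, sub_zero]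
  calc (1 + N).adjugate = (1 + N).adjugate * ((1 + N) * ∑ i ∈ range k, (-N) ^ i) := by
        rw [hinv, mul_one]
    _ = ∑ i ∈ range k, (-N) ^ i := by
        rw [← mul_assoc, adjugate_mul, det_one_add_of_isNilpotent ⟨k, hN⟩, one_smul, one_mul]

theorem exists_submatrix_det_eq_neg_one_pow_mul_adjugate {K : ℕ}
    (hι : Fintype.card ι = K + 1) (A : Matrix ι ι R) (s t : ι) :
    ∃ (r c : Fin K → ι) (e : ℕ), (A.submatrix r c).det = (-1) ^ e * A.adjugate s t := by
  set f := (Fintype.equivFinOfCardEq hι).symm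
  refine ⟨f ∘ (f.symm t).succAbove, f ∘ (f.symm s).succAbove, f.symm t + f.symm s, ?_⟩
  have := adjugate_fin_succ_eq_det_submatrix (A.submatrix f f) (f.symm s) (f.symm t)
  rw [adjugate_submatrix_equiv_self, submatrix_apply, f.apply_symm_apply, f.apply_symm_apply,
    submatrix_submatrix] at this
  rw [this, ← mul_assoc, ← pow_add, Even.neg_one_pow ⟨_, rfl⟩, one_mul]

end Matrix

theorem MvPolynomial.exists_totalDegree_le_one_det_eq_of_det_eq_neg_one_pow_mul
    {σ R : Type*} [CommRing R] {K : ℕ} (hK : 0 < K)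
    {G : Matrix (Fin K) (Fin K) (MvPolynomial σ R)} (hG : ∀ i j, (G i j).totalDegree ≤ 1)
    {e : ℕ} {p : MvPolynomial σ R} (hdet : G.det = (-1) ^ e * p) :
    ∃ F : Matrix (Fin K) (Fin K) (MvPolynomial σ R),
      (∀ i j, (F i j).totalDegree ≤ 1) ∧ F.det = p := by
  refine ⟨G.updateRow ⟨0, hK⟩ ((-1 : MvPolynomial σ R) ^ e • G ⟨0, hK⟩), fun i j => ?_, ?_⟩
  · rcases eq_or_ne i ⟨0, hK⟩ with rfl | hi
    · rcases neg_one_pow_eq_or (MvPolynomial σ R) e with h | h <;>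
        simp [h, totalDegree_neg, hG]
    · rw [updateRow_ne hi]
      exact hG i j
  · rw [det_updateRow_smul, updateRow_eq_self, hdet, ← mul_assoc, ← pow_add,
      Even.neg_one_pow ⟨_, rfl⟩, one_mul]

namespace Multiperm

variable {n : ℕ}

def size (t : Fin n → ℕ) : ℕ := ∑ i, t i

lemma size_add (s t : Fin n → ℕ) : size (s + t) = size s + size t := sum_add_distrib

lemma size_single (j : Fin n) : size (Pi.single j 1) = 1 := by simp [size]

lemma size_mono {s t : Fin n → ℕ} (h : s ≤ t) : size s ≤ size t := sum_le_sum fun i _ => h i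

def content {k : ℕ} (σ : Fin k → Fin n) : Fin n → ℕ := ∑ i, Pi.single (σ i) 1

lemma content_cons {k : ℕ} (j : Fin n) (σ : Fin k → Fin n) :
    content (Fin.cons j σ : Fin (k + 1) → Fin n) = Pi.single j 1 + content σ := by
  simp [content, Fin.sum_univ_succ]

lemma size_content {k : ℕ} (σ : Fin k → Fin n) : size (content σ) = k := by
  simp [content, size, Finset.sum_apply, sum_comm (γ := Fin n)]

lemma content_apply {k : ℕ} (σ : Fin k → Fin n) (j : Fin n) : content σ j = #{i | σ i = j} := by
  simp [content, Finset.sum_apply, Pi.single_apply, eq_comm]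

section Paths

variable {R : Type*} [CommSemiring R] (x : ℕ → Fin n → R)

def pathSum (k : ℕ) (s t : Fin n → ℕ) : R :=
  ∑ σ : Fin k → Fin n, if t = s + content σ then ∏ i : Fin k, x (size s + i) (σ i) else 0

lemma pathSum_zero (s t : Fin n → ℕ) : pathSum x 0 s t = if t = s then 1 else 0 := by
  simp [pathSum, content]

lemma pathSum_succ (k : ℕ) (s t : Fin n → ℕ) :
    pathSum x (k + 1) s t = ∑ j, x (size s) j * pathSum x k (s + Pi.single j 1) t := by
  rw [pathSum, ← (Fin.consEquiv fun _ => Fin n).sum_comp, Fintype.sum_prod_type]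
  refine sum_congr rfl fun j _ => ?_
  simp [pathSum, mul_sum, Fin.consEquiv, content_cons, Fin.prod_univ_succ, size_add, size_single,
    add_assoc, add_comm 1]

lemma pathSum_eq_zero_of_size_ne {k : ℕ} {s t : Fin n → ℕ} (h : size s + k ≠ size t) :
    pathSum x k s t = 0 :=
  sum_eq_zero fun σ _ => if_neg fun ht => h (by rw [ht, size_add, size_content])

lemma pathSum_eq_zero_of_not_le {k : ℕ} {s t : Fin n → ℕ} (h : ¬ s ≤ t) :
    pathSum x k s t = 0 :=
  sum_eq_zero fun σ _ => if_neg fun ht => h (by rw [ht]; exact le_self_add)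

def hasseMatrix (m : Fin n → ℕ) : Matrix (Iic m) (Iic m) R :=
  of fun s t => ∑ j, if t.1 = s.1 + Pi.single j 1 then x (size s.1) j else 0

lemma hasseMatrix_pow_apply (m : Fin n → ℕ) (k : ℕ) (s t : Iic m) :
    (hasseMatrix x m ^ k) s t = pathSum x k s t := by
  induction k generalizing s with
  | zero =>
    rw [pow_zero, one_apply, pathSum_zero]
    exact if_congr (Subtype.ext_iff.trans eq_comm) rfl rfl
  | succ k ih =>
    rw [pow_succ', mul_apply, pathSum_succ]
    simp_rw [ih, hasseMatrix, of_apply, sum_mul, ite_mul, zero_mul]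
    rw [sum_comm]
    refine sum_congr rfl fun j _ => ?_
    by_cases h : s.1 + Pi.single j 1 ∈ Iic m
    · rw [Fintype.sum_eq_single ⟨_, h⟩ fun u hu => if_neg fun h' => hu (Subtype.ext h'),
        if_pos rfl]
    · have hle : ¬ s.1 + Pi.single j 1 ≤ t.1 := fun hle =>
        h (mem_Iic.mpr (hle.trans (mem_Iic.mp t.2)))
      rw [sum_eq_zero fun u _ => if_neg fun h' => h (by rw [← h']; exact u.2),
        pathSum_eq_zero_of_not_le x hle, mul_zero]

lemma hasseMatrix_pow_eq_zero (m : Fin n → ℕ) : hasseMatrix x m ^ (size m + 1) = 0 := by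
  ext s t
  rw [hasseMatrix_pow_apply, Matrix.zero_apply, pathSum_eq_zero_of_size_ne]
  have := size_mono (mem_Iic.mp t.2)
  omega

end Paths

def bot (m : Fin n → ℕ) : Iic m := ⟨0, by simp⟩

def top (m : Fin n → ℕ) : Iic m := ⟨m, mem_Iic.mpr le_rfl⟩

lemma adjugate_one_add_hasseMatrix_bot_top {R : Type*} [CommRing R] [IsReduced R]
    (x : ℕ → Fin n → R) (m : Fin n → ℕ) :
    (1 + hasseMatrix x m).adjugate (bot m) (top m) = (-1) ^ size m * pathSum x (size m) 0 m := by
  have hpow (k : ℕ) : (-hasseMatrix x m) ^ k = (-1 : R) ^ k • hasseMatrix x m ^ k := by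
    rw [← neg_one_smul R, smul_pow]
  rw [adjugate_one_add_of_pow_eq_zero (hasseMatrix_pow_eq_zero x m), Matrix.sum_apply,
    sum_eq_single (size m)]
  · rw [hpow, Matrix.smul_apply, hasseMatrix_pow_apply, smul_eq_mul]
    rfl
  · intro k _ hk
    rw [hpow, Matrix.smul_apply, hasseMatrix_pow_apply, pathSum_eq_zero_of_size_ne, smul_zero]
    simpa [bot, top, size] using hk
  · simp

lemma totalDegree_one_add_hasseMatrix_le {σ R : Type*} [CommSemiring R]
    {x : ℕ → Fin n → MvPolynomial σ R} (hx : ∀ a j, (x a j).totalDegree ≤ 1)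
    (m : Fin n → ℕ) (s t : Iic m) : ((1 + hasseMatrix x m) s t).totalDegree ≤ 1 := by
  rw [Matrix.add_apply]
  refine (totalDegree_add _ _).trans (max_le ?_ ?_)
  · rw [one_apply]
    split_ifs <;> simp
  · rw [hasseMatrix, of_apply]
    refine (totalDegree_finsetSum _ _).trans (Finset.sup_le fun j _ => ?_)
    split_ifs
    · exact hx _ j
    · simp

-- Level `a` is the paper's `a + 1`; levels `a ≥ γ` label no edge inside the box, so the junk
-- value `0` there is never seen.
noncomputable def varLabel (R : Type*) [CommSemiring R] (γ a : ℕ) (j : Fin n) :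
    MvPolynomial (Fin γ × Fin n) R :=
  if h : a < γ then X (⟨a, h⟩, j) else 0

lemma totalDegree_varLabel_le (R : Type*) [CommSemiring R] (γ a : ℕ) (j : Fin n) :
    (varLabel R γ a j).totalDegree ≤ 1 := by
  unfold varLabel
  split_ifs
  · exact (totalDegree_monomial_le _ _).trans (by simp)
  · simp

lemma pathSum_varLabel_eq_mpermPoly (m : Fin n → ℕ) :
    pathSum (varLabel ℚ (∑ j, m j)) (size m) 0 m = mpermPoly (∑ j, m j) n m := by
  rw [pathSum, mpermPoly, sum_filter]
  refine sum_congr rfl fun σ _ => if_congr ?_ (prod_congr rfl fun i _ => ?_) rfl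
  · simp only [zero_add, funext_iff, content_apply]
    exact forall_congr' fun j => eq_comm
  · simp only [size, Pi.zero_apply, sum_const_zero, zero_add]
    rw [varLabel, dif_pos (show (i : ℕ) < ∑ j, m j from i.isLt)]
    rfl

lemma mpermPoly_eq_one_of_forall_eq_zero {m : Fin n → ℕ} (hm : ∀ j, m j = 0) :
    mpermPoly (∑ j, m j) n m = 1 := by
  have : IsEmpty (Fin (∑ j, m j)) := by
    rw [sum_eq_zero fun j _ => hm j]
    infer_instance
  simp [mpermPoly, hm]

end Multiperm

open Multiperm in
/-- The determinantal complexity of the multipermanent is at most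
`∏ (m_i + 1) - 1`: there is a square matrix of that size with affine-linear
entries whose determinant equals `mperm_m`. -/
theorem dc_mperm_upper_bound (n : ℕ) (m : Fin n → ℕ) :
    ∃ F : Fin (∏ i, (m i + 1) - 1) → Fin (∏ i, (m i + 1) - 1) →
        MvPolynomial (Fin (∑ j, m j) × Fin n) ℚ,
      (∀ i j, (F i j).totalDegree ≤ 1) ∧
        (Matrix.of F).det = mpermPoly (∑ j, m j) n m := by
  have hprod : 0 < ∏ i, (m i + 1) := by positivity
  rcases Nat.eq_zero_or_pos (∏ i, (m i + 1) - 1) with h0 | hpos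
  · have hm (j : Fin n) : m j = 0 := by
      have := Nat.le_of_dvd hprod (dvd_prod_of_mem (fun i => m i + 1) (mem_univ j))
      omega
    have : IsEmpty (Fin (∏ i, (m i + 1) - 1)) := by
      rw [h0]
      infer_instance
    exact ⟨0, isEmptyElim, by rw [det_isEmpty, mpermPoly_eq_one_of_forall_eq_zero hm]⟩
  · have hcard : Fintype.card (Iic m) = (∏ i, (m i + 1) - 1) + 1 := by
      rw [Fintype.card_coe, Pi.card_Iic]
      simp only [Nat.card_Iic]
      omega
    obtain ⟨r, c, e, hdet⟩ := exists_submatrix_det_eq_neg_one_pow_mul_adjugate hcard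
      (1 + hasseMatrix (varLabel ℚ (∑ j, m j)) m) (bot m) (top m)
    rw [adjugate_one_add_hasseMatrix_bot_top, pathSum_varLabel_eq_mpermPoly, ← mul_assoc,
      ← pow_add] at hdet
    exact exists_totalDegree_le_one_det_eq_of_det_eq_neg_one_pow_mul hpos
      (fun i j => totalDegree_one_add_hasseMatrix_le (totalDegree_varLabel_le ℚ _) m _ _) hdet
end

section
/- Let P be a graded poset of rank d with p elements, having unique minimum 0̂ and unique maximum 1̂, and let each edge e of its Hasse diagram be labeled by a linear form L_e in variables x_1,…,x_N. Then the polynomial f = Σ_C Π_{e∈C} L_e, summed over saturated chains C from 0̂ to 1̂, has a determinantal representation of size p - 1; i.e., f = ±det(A) for a (p-1)×(p-1) matrix A whose entries are affine-linear in x_1,…,x_N. -/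
/-! Let `H` be the Hasse matrix of `P`, with `H x y = L x y` when `x ⋖ y` and `0` otherwise.
Since `H` is strictly upper triangular with respect to a linear extension of `P`, the matrix
`1 - H` has determinant `1` and `H` is nilpotent, so the adjugate of `1 - H` is its inverse, the
finite geometric series `∑ₖ Hᵏ`. The `(⊥, ⊤)` entry of `Hᵏ` is the sum over the saturated chains
of length `k` from `⊥` to `⊤` of the products of their edge weights; by gradedness only `k = d`
contributes, so the `(⊥, ⊤)` entry of the adjugate is `f`. Up to sign, that entry is the minor of
`1 - H` obtained by deleting the row of `⊤` and the column of `⊥`: a matrix of size `p - 1` whose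
entries are `0`, `1` or `-L x y`. -/

open MvPolynomial Matrix Finset

namespace Matrix

variable {n R : Type*} [Fintype n] [DecidableEq n]

theorem pow_apply_eq_sum_paths [CommSemiring R] (A : Matrix n n R) (k : ℕ) (i j : n) :
    (A ^ k) i j = ∑ c : Fin (k + 1) → n,
      if c 0 = i ∧ c (Fin.last k) = j then ∏ t : Fin k, A (c t.castSucc) (c t.succ) else 0 := by
  induction k generalizing j with
  | zero =>
    rw [← (Equiv.funUnique (Fin 1) n).symm.sum_comp]
    simp [one_apply, ite_and, eq_comm (b := i)]
  | succ k ih =>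
    rw [pow_succ, mul_apply, ← (Fin.snocEquiv fun _ => n).sum_comp, Fintype.sum_prod_type]
    simp only [ih, Finset.sum_mul, Fin.snocEquiv_apply, Fin.prod_univ_castSucc, ite_and, ite_mul,
      zero_mul, Finset.sum_comm (γ := n), sum_ite_irrel, sum_ite_eq, sum_ite_eq', mem_univ,
      if_true, sum_const_zero, Fin.snoc_apply_zero, Fin.snoc_last, Fin.snoc_castSucc,
      Fin.succ_last, Fin.succ_castSucc]

theorem pow_eq_zero_of_strictUpper [PartialOrder n] [CommSemiring R] {A : Matrix n n R}
    (hA : ∀ i j, A i j ≠ 0 → i < j) {k : ℕ} (hk : Fintype.card n ≤ k) : A ^ k = 0 := by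
  ext i j
  rw [pow_apply_eq_sum_paths, zero_apply]
  refine Finset.sum_eq_zero fun c _ => ite_eq_right_iff.mpr fun _ => ?_
  by_contra hprod
  have hc : StrictMono c := Fin.strictMono_iff_lt_succ.mpr fun t =>
    hA _ _ fun h0 => hprod (Finset.prod_eq_zero (Finset.mem_univ t) h0)
  have := Fintype.card_le_of_injective c hc.injective
  rw [Fintype.card_fin] at this
  omega

theorem det_one_sub_of_strictUpper [PartialOrder n] [CommRing R] {A : Matrix n n R}
    (hA : ∀ i j, A i j ≠ 0 → i < j) : (1 - A).det = 1 := by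
  let e : LinearExtension n ≃ n := Equiv.refl n
  let _ : Fintype (LinearExtension n) := ‹Fintype n›
  have hdiag : ∀ i, A i i = 0 := fun i => not_imp_comm.mp (hA i i) (lt_irrefl i)
  rw [← det_submatrix_equiv_self e, det_of_isUpperTriangular]
  · exact Finset.prod_eq_one fun i _ => by simp [hdiag]
  · intro i j (hji : j < i)
    have hA0 : A (e i) (e j) = 0 := by
      by_contra h
      exact (toLinearExtension.monotone (hA _ _ h).le).not_gt hji
    rw [submatrix_apply, sub_apply, hA0, sub_zero, one_apply_ne (e.injective.ne hji.ne')]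

theorem adjugate_one_sub_eq_sum_pow [CommRing R] {A : Matrix n n R} {m : ℕ}
    (hdet : (1 - A).det = 1) (hA : A ^ m = 0) :
    adjugate (1 - A) = ∑ k ∈ range m, A ^ k :=
  calc adjugate (1 - A) = adjugate (1 - A) * ((1 - A) * ∑ k ∈ range m, A ^ k) := by
        rw [mul_neg_geom_sum, hA, sub_zero, mul_one]
    _ = ∑ k ∈ range m, A ^ k := by rw [← mul_assoc, adjugate_mul, hdet, one_smul, one_mul]

theorem exists_adjugate_apply_eq_det_submatrix [CommRing R] {m : ℕ}
    (hcard : Fintype.card n = m + 1) (A : Matrix n n R) (i j : n) :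
    ∃ r c : Fin m → n,
      adjugate A i j = (A.submatrix r c).det ∨ adjugate A i j = -(A.submatrix r c).det := by
  let e := (Fintype.equivFinOfCardEq hcard).symm
  obtain ⟨i, rfl⟩ := e.surjective i
  obtain ⟨j, rfl⟩ := e.surjective j
  refine ⟨e ∘ j.succAbove, e ∘ i.succAbove, ?_⟩
  have := adjugate_fin_succ_eq_det_submatrix (A.submatrix e e) i j
  rw [adjugate_submatrix_equiv_self, submatrix_apply, submatrix_submatrix] at this
  rw [this]
  rcases neg_one_pow_eq_or R (j + i : ℕ) with h | h <;> simp [h]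

end Matrix

section Hasse

variable {P R : Type*} [PartialOrder P] [DecidableRel ((· ⋖ ·) : P → P → Prop)]

def hasseMatrix [Zero R] (L : P → P → R) : Matrix P P R :=
  of fun x y => if x ⋖ y then L x y else 0

theorem lt_of_hasseMatrix_apply_ne_zero [Zero R] {L : P → P → R} {x y : P}
    (h : hasseMatrix L x y ≠ 0) : x < y := by
  by_contra hxy
  exact h (if_neg fun hcov => hxy hcov.lt)

variable [DecidableEq P]

theorem totalDegree_one_sub_hasseMatrix_apply_le [CommRing R] {σ : Type*}
    {L : P → P → MvPolynomial σ R} (hL : ∀ x y : P, x ⋖ y → (L x y).IsHomogeneous 1)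
    (x y : P) : ((1 - hasseMatrix L) x y).totalDegree ≤ 1 := by
  refine (totalDegree_sub _ _).trans (max_le ?_ ?_)
  · rw [one_apply]
    split_ifs <;> simp
  · rw [hasseMatrix, of_apply]
    split_ifs with hcov
    · exact (hL x y hcov).totalDegree_le
    · simp

variable [Fintype P]

theorem hasseMatrix_pow_apply [CommSemiring R] (L : P → P → R) (k : ℕ) (x y : P) :
    (hasseMatrix L ^ k) x y = ∑ c : Fin (k + 1) → P,
      if c 0 = x ∧ c (Fin.last k) = y ∧ ∀ t : Fin k, c t.castSucc ⋖ c t.succ then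
        ∏ t : Fin k, L (c t.castSucc) (c t.succ)
      else 0 := by
  rw [pow_apply_eq_sum_paths]
  refine Finset.sum_congr rfl fun c _ => ?_
  simp only [hasseMatrix, of_apply, Fintype.prod_ite_zero, ← ite_and, and_assoc]

theorem hasseMatrix_pow_eq_zero [CommSemiring R] (L : P → P → R) {k : ℕ}
    (hk : Fintype.card P ≤ k) : hasseMatrix L ^ k = 0 :=
  pow_eq_zero_of_strictUpper (fun _ _ => lt_of_hasseMatrix_apply_ne_zero) hk

theorem adjugate_one_sub_hasseMatrix [CommRing R] (L : P → P → R) :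
    adjugate (1 - hasseMatrix L) = ∑ k ∈ range (Fintype.card P), hasseMatrix L ^ k :=
  adjugate_one_sub_eq_sum_pow
    (det_one_sub_of_strictUpper fun _ _ => lt_of_hasseMatrix_apply_ne_zero)
    (hasseMatrix_pow_eq_zero L le_rfl)

theorem adjugate_one_sub_hasseMatrix_bot_top [BoundedOrder P] [CommRing R] {d : ℕ}
    (hgrade : ∀ (e : ℕ) (c : Fin (e + 1) → P), c 0 = ⊥ → c (Fin.last e) = ⊤ →
      (∀ i : Fin e, c i.castSucc ⋖ c i.succ) → e = d)
    (L : P → P → R) :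
    adjugate (1 - hasseMatrix L) ⊥ ⊤ = (hasseMatrix L ^ d) ⊥ ⊤ := by
  rw [adjugate_one_sub_hasseMatrix, Matrix.sum_apply]
  refine Finset.sum_eq_single d (fun k _ hkd => ?_) fun hd => ?_
  · rw [hasseMatrix_pow_apply]
    exact Finset.sum_eq_zero fun c _ =>
      if_neg fun ⟨h0, hlast, hcov⟩ => hkd (hgrade k c h0 hlast hcov)
  · rw [hasseMatrix_pow_eq_zero L (by simpa using hd), Matrix.zero_apply]

end Hasse

open scoped Classical in
/-- (Grenet-style construction) Let `P` be a finite bounded poset in which every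
saturated chain from `⊥` to `⊤` has length `d` (i.e. `P` is graded of rank `d`),
with `p` elements, and label each edge of its Hasse diagram by a linear form
`L x y` in variables `x_1, …, x_N`.  Then the polynomial
`f = Σ_C Π_{e ∈ C} L_e`, summed over saturated chains `C` from `⊥` to `⊤`,
has a determinantal representation of size `p - 1`. -/
theorem poset_polynomial_det_rep (P : Type*) [Fintype P] [PartialOrder P] [BoundedOrder P]
    (d Nvars : ℕ)
    (hgrade : ∀ (e : ℕ) (c : Fin (e + 1) → P), c 0 = ⊥ → c (Fin.last e) = ⊤ →
      (∀ i : Fin e, c i.castSucc ⋖ c i.succ) → e = d)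
    (L : P → P → MvPolynomial (Fin Nvars) ℚ)
    (hL : ∀ x y : P, x ⋖ y → (L x y).IsHomogeneous 1)
    (f : MvPolynomial (Fin Nvars) ℚ)
    (hf : f = ∑ c : Fin (d + 1) → P,
      if c 0 = ⊥ ∧ c (Fin.last d) = ⊤ ∧ (∀ i : Fin d, c i.castSucc ⋖ c i.succ) then
        ∏ i : Fin d, L (c i.castSucc) (c i.succ)
      else 0) :
    ∃ A : Matrix (Fin (Fintype.card P - 1)) (Fin (Fintype.card P - 1))
        (MvPolynomial (Fin Nvars) ℚ),
      (∀ i j, (A i j).totalDegree ≤ 1) ∧ (A.det = f ∨ A.det = -f) := by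
  have hcofactor : adjugate (1 - hasseMatrix L) ⊥ ⊤ = f := by
    rw [adjugate_one_sub_hasseMatrix_bot_top hgrade, hasseMatrix_pow_apply, hf]
  obtain ⟨r, c, hminor⟩ := exists_adjugate_apply_eq_det_submatrix
    (Nat.sub_add_cancel Fintype.card_pos).symm (1 - hasseMatrix L) ⊥ ⊤
  refine ⟨(1 - hasseMatrix L).submatrix r c,
    fun i j => totalDegree_one_sub_hasseMatrix_apply_le hL _ _, ?_⟩
  rw [← hcofactor]
  rcases hminor with h | h
  · exact Or.inl h.symm
  · exact Or.inr (by rw [h, neg_neg])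
end
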